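/- arXiv:1804.03292 — 2 statements merged into one kernel-verified Lean document; each statement's English description precedes it below -/
import Mathlib

section
/- The group Γ₁(3) = {[[a,b],[c,d]] ∈ SL(2,ℤ) : a ≡ d ≡ 1 (mod 3), c ≡ 0 (mod 3)} is generated by the two matrices T = [[1,1],[0,1]] and U = [[1,0],[3,1]]. -/
open scoped MatrixGroups

/-- The matrix `T = [[1,1],[0,1]]` as an element of `SL(2,ℤ)`. -/
def stmt10T : Matrix.SpecialLinearGroup (Fin 2) ℤ :=
  ⟨!![1, 1; 0, 1], by norm_num [Matrix.det_fin_two_of]⟩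

/-- The matrix `U = [[1,0],[3,1]]` as an element of `SL(2,ℤ)`. -/
def stmt10U : Matrix.SpecialLinearGroup (Fin 2) ℤ :=
  ⟨!![1, 0; 3, 1], by norm_num [Matrix.det_fin_two_of]⟩

lemma stmt10T_eq : stmt10T = ModularGroup.T := Subtype.ext rfl

lemma stmt10_coe_T_zpow (n : ℤ) : (stmt10T ^ n).1 = !![1, n; 0, 1] := by
  rw [stmt10T_eq]; exact ModularGroup.coe_T_zpow n

lemma stmt10_coe_U_zpow (n : ℤ) : (stmt10U ^ n).1 = !![1, 0; 3 * n, 1] := by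
  induction n using Int.induction_on with
  | zero => simp [Matrix.one_fin_two]
  | succ k ih =>
      rw [zpow_add_one, Matrix.SpecialLinearGroup.coe_mul, ih]
      rw [show (stmt10U : Matrix (Fin 2) (Fin 2) ℤ) = !![1,0;3,1] from rfl]
      rw [Matrix.mul_fin_two]
      congr 1 <;> push_cast <;> ring
  | pred k ih =>
      rw [zpow_sub_one, Matrix.SpecialLinearGroup.coe_mul, ih]
      have hUinv : ((stmt10U⁻¹ : SL(2,ℤ)) : Matrix (Fin 2) (Fin 2) ℤ) = !![1,0;-3,1] := by
        have h1 : stmt10U * ⟨!![1,0;-3,1], by norm_num [Matrix.det_fin_two_of]⟩ = 1 := by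
          apply Subtype.ext
          show (!![1,0;3,1] : Matrix (Fin 2) (Fin 2) ℤ) * !![1,0;-3,1] = 1
          rw [Matrix.mul_fin_two, Matrix.one_fin_two]
          norm_num
        rw [(eq_inv_of_mul_eq_one_right h1).symm]
      rw [hUinv, Matrix.mul_fin_two]
      congr 1 <;> push_cast <;> ring

lemma stmt10_exists_near_pos (a b : ℤ) (hb : 0 < b) : ∃ n : ℤ, 2 * |a + n * b| ≤ b := by
  have h0 : 0 ≤ a % b := Int.emod_nonneg a hb.ne'
  have h1 : a % b < b := Int.emod_lt_of_pos a hb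
  rcases le_or_gt (2 * (a % b)) b with h | h
  · refine ⟨-(a / b), ?_⟩
    have he : a + -(a / b) * b = a % b := by rw [Int.emod_def]; ring
    rw [he, abs_of_nonneg h0]; exact h
  · refine ⟨-(a / b) - 1, ?_⟩
    have he : a + (-(a / b) - 1) * b = a % b - b := by rw [Int.emod_def]; ring
    rw [he, abs_of_nonpos (by omega)]
    omega

lemma stmt10_exists_near (a b : ℤ) (hb : b ≠ 0) : ∃ n : ℤ, 2 * |a + n * b| ≤ |b| := by
  rcases hb.lt_or_gt with hneg | hpos
  · obtain ⟨n, hn⟩ := stmt10_exists_near_pos a (-b) (by omega)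
    refine ⟨-n, ?_⟩
    rw [abs_of_neg hneg]
    convert hn using 3
    ring
  · obtain ⟨n, hn⟩ := stmt10_exists_near_pos a b hpos
    exact ⟨n, by rwa [abs_of_pos hpos]⟩

lemma stmt10T_mem : stmt10T ∈ CongruenceSubgroup.Gamma1 3 := by
  rw [CongruenceSubgroup.Gamma1_mem]
  refine ⟨?_, ?_, ?_⟩ <;> decide

lemma stmt10U_mem : stmt10U ∈ CongruenceSubgroup.Gamma1 3 := by
  rw [CongruenceSubgroup.Gamma1_mem]
  refine ⟨?_, ?_, ?_⟩ <;> decide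

lemma stmt10_key : ∀ k : ℕ, ∀ g : SL(2,ℤ), g ∈ CongruenceSubgroup.Gamma1 3 →
    ((g : Matrix (Fin 2) (Fin 2) ℤ) 1 0).natAbs = k →
    g ∈ Subgroup.closure {stmt10T, stmt10U} := by
  intro k
  induction k using Nat.strong_induction_on with
  | _ k ih =>
  intro g hg hk
  set a : ℤ := (g : Matrix (Fin 2) (Fin 2) ℤ) 0 0 with ha_def
  set b : ℤ := (g : Matrix (Fin 2) (Fin 2) ℤ) 0 1 with hb_def
  set c : ℤ := (g : Matrix (Fin 2) (Fin 2) ℤ) 1 0 with hc_def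
  set d : ℤ := (g : Matrix (Fin 2) (Fin 2) ℤ) 1 1 with hd_def
  have hgmat : (g : Matrix (Fin 2) (Fin 2) ℤ) = !![a, b; c, d] :=
    Matrix.eta_fin_two _
  have hdet : a * d - b * c = 1 := by
    have h2 := g.2
    rw [Matrix.det_fin_two] at h2
    exact h2
  rw [CongruenceSubgroup.Gamma1_mem] at hg
  obtain ⟨hA, hD, hC⟩ := hg
  rw [← ha_def] at hA
  rw [← hd_def] at hD
  rw [← hc_def] at hC
  have hT : stmt10T ∈ Subgroup.closure {stmt10T, stmt10U} :=
    Subgroup.subset_closure (by simp)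
  have hU : stmt10U ∈ Subgroup.closure {stmt10T, stmt10U} :=
    Subgroup.subset_closure (by simp)
  by_cases hc : c = 0
  · -- c = 0 : then a = d = 1 and g = T ^ b
    have had : a * d = 1 := by rw [hc] at hdet; linarith
    rcases Int.eq_one_or_neg_one_of_mul_eq_one' had with ⟨ha1, hd1⟩ | ⟨ha1, hd1⟩
    · have hgeq : g = stmt10T ^ b := by
        apply Subtype.ext
        rw [stmt10_coe_T_zpow, hgmat, ha1, hc, hd1]
      rw [hgeq]
      exact zpow_mem hT b
    · exfalso
      rw [ha1] at hA
      exact absurd hA (by decide)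
  · -- c ≠ 0 : reduce |c|
    have hc3 : ((c : ZMod 3)) = 0 := hC
    have ha0 : a ≠ 0 := by
      intro h
      rw [h] at hA
      exact absurd hA (by decide)
    obtain ⟨n, hn⟩ := stmt10_exists_near a c hc
    set a' : ℤ := a + n * c with ha'_def
    have ha'3 : ((a' : ZMod 3)) = 1 := by
      rw [ha'_def]; push_cast; rw [hA, hc3]; ring
    have ha' : a' ≠ 0 := by
      intro h
      rw [h] at ha'3
      exact absurd ha'3 (by decide)
    obtain ⟨m, hm⟩ := stmt10_exists_near c (3 * a') (by simp [ha'])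
    set c' : ℤ := c + m * (3 * a') with hc'_def
    have habs : |c'| < |c| := by
      have h1 : |3 * a'| = 3 * |a'| := by rw [abs_mul]; norm_num
      rw [h1] at hm
      have h2 : 0 < |c| := abs_pos.mpr hc
      have h3 : 0 ≤ |c'| := abs_nonneg _
      have h4 : 0 ≤ |a'| := abs_nonneg _
      nlinarith
    -- the reduced matrix
    set g' : SL(2,ℤ) := stmt10U ^ m * (stmt10T ^ n * g) with hg'_def
    have hg'mat : (g' : Matrix (Fin 2) (Fin 2) ℤ) =
        !![a', b + n * d; 3 * m * a' + c, 3 * m * (b + n * d) + d] := by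
      rw [hg'_def, Matrix.SpecialLinearGroup.coe_mul, Matrix.SpecialLinearGroup.coe_mul,
        stmt10_coe_U_zpow, stmt10_coe_T_zpow, hgmat, Matrix.mul_fin_two, Matrix.mul_fin_two]
      rw [ha'_def]
      congr 1 <;> push_cast <;> ring
    have hg'c : (g' : Matrix (Fin 2) (Fin 2) ℤ) 1 0 = c' := by
      rw [hg'mat, hc'_def]
      show 3 * m * a' + c = c + m * (3 * a')
      ring
    have hg'mem : g' ∈ CongruenceSubgroup.Gamma1 3 := by
      have hgG : g ∈ CongruenceSubgroup.Gamma1 3 := by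
        rw [CongruenceSubgroup.Gamma1_mem]
        exact ⟨hA, hD, hC⟩
      exact mul_mem (zpow_mem stmt10U_mem m) (mul_mem (zpow_mem stmt10T_mem n) hgG)
    have hlt : ((g' : Matrix (Fin 2) (Fin 2) ℤ) 1 0).natAbs < k := by
      rw [hg'c, ← hk]
      have h5 := habs
      rw [Int.abs_eq_natAbs, Int.abs_eq_natAbs] at h5
      exact_mod_cast h5
    have hg'cl : g' ∈ Subgroup.closure {stmt10T, stmt10U} :=
      ih _ hlt g' hg'mem rfl
    have hgeq : g = (stmt10T ^ n)⁻¹ * ((stmt10U ^ m)⁻¹ * g') := by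
      rw [hg'_def]; group
    rw [hgeq]
    exact mul_mem (inv_mem (zpow_mem hT n)) (mul_mem (inv_mem (zpow_mem hU m)) hg'cl)

/-- The congruence subgroup `Γ₁(3) ⊆ SL(2,ℤ)` is generated by
`T = [[1,1],[0,1]]` and `U = [[1,0],[3,1]]`. -/
theorem stmt10 :
    Subgroup.closure {stmt10T, stmt10U} = CongruenceSubgroup.Gamma1 3 := by
  apply le_antisymm
  · rw [Subgroup.closure_le]
    rintro x (rfl | rfl)
    · exact stmt10T_mem
    · exact stmt10U_mem
  · intro g hg
    exact stmt10_key _ g hg rfl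
end

section
/- Let n ≥ 0 and let f₀, f₁, …, f_n : ℍ → ℂ be holomorphic functions on the upper half-plane such that f₀(τ) + f₁(τ)/(τ − τ̄) + ⋯ + f_n(τ)/(τ − τ̄)^n = 0 for all τ ∈ ℍ. Then f₀ = f₁ = ⋯ = f_n = 0 identically. -/
open scoped ComplexConjugate

open Complex Filter Finset Polynomial in
private lemma stmt13_key (n : ℕ) (f : ℕ → ℂ → ℂ)
    (hf : ∀ i ≤ n, DifferentiableOn ℂ (f i) {τ : ℂ | 0 < τ.im})
    (hsum : ∀ τ : ℂ, 0 < τ.im →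
      ∑ i ∈ Finset.range (n + 1), f i τ / (τ - conj τ) ^ i = 0)
    (x : ℝ) : ∀ τ ∈ {τ : ℂ | 0 < τ.im},
      ∑ i ∈ Finset.range (n + 1), f i τ / (2 * (τ - (x : ℂ))) ^ i = 0 := by
  set U : Set ℂ := {τ : ℂ | 0 < τ.im} with hU
  have hUopen : IsOpen U := isOpen_lt continuous_const Complex.continuous_im
  have hUconn : IsPreconnected U := (convex_halfSpace_im_gt 0).isPreconnected
  set g : ℂ → ℂ := fun τ => ∑ i ∈ Finset.range (n + 1), f i τ / (2 * (τ - (x : ℂ))) ^ i with hg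
  have hden : ∀ τ ∈ U, (2 * (τ - (x : ℂ))) ≠ 0 := by
    intro τ hτ h
    have h2 : (2 * (τ - (x : ℂ))).im = 0 := by rw [h]; simp
    simp [Complex.mul_im, Complex.sub_im] at h2
    exact absurd h2 (ne_of_gt hτ)
  have hgd : DifferentiableOn ℂ g U := by
    apply DifferentiableOn.fun_sum
    intro i hi
    exact (hf i (Nat.lt_succ_iff.mp (Finset.mem_range.mp hi))).div
      (((differentiable_const _).mul (differentiable_id.sub_const _)).differentiableOn.pow i)
      (fun τ hτ => pow_ne_zero i (hden τ hτ))
  have hline : ∀ τ : ℂ, τ.re = x → 0 < τ.im → g τ = 0 := by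
    intro τ hre him
    have h2 : 2 * (τ - (x : ℂ)) = τ - conj τ := by
      apply Complex.ext <;>
        simp [Complex.mul_re, Complex.mul_im, Complex.sub_re, Complex.sub_im, hre] <;> ring
    simpa [hg, h2] using hsum τ him
  have hz₀ : ((x : ℂ) + Complex.I) ∈ U := by simp [hU]
  -- sequence approaching x + I on the vertical line
  have hfreq : ∃ᶠ z in nhdsWithin ((x : ℂ) + Complex.I) {((x : ℂ) + Complex.I)}ᶜ, g z = 0 := by
    set r : ℕ → ℝ := fun k => 1 + 1 / (k + 1) with hr
    have hr0 : ∀ k, 0 < r k := fun k => by positivity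
    have hr1 : ∀ k, r k ≠ 1 := by
      intro k h
      have h1 : (1 : ℝ) / (k + 1) = 0 := by
        have := h
        simp only [hr] at this
        linarith
      have : (1 : ℝ) / (k + 1) ≠ 0 := by positivity
      exact this h1
    set u : ℕ → ℂ := fun k => (x : ℂ) + (r k : ℂ) * Complex.I with hu
    have huim : ∀ k, (u k).im = r k := by intro k; simp [hu]
    have hure : ∀ k, (u k).re = x := by intro k; simp [hu]
    have hune : ∀ k, u k ≠ (x : ℂ) + Complex.I := by
      intro k h
      have h2 : (u k).im = ((x : ℂ) + Complex.I).im := by rw [h]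
      rw [huim k] at h2
      simp at h2
      exact hr1 k h2
    have htend : Tendsto u atTop (nhds ((x : ℂ) + Complex.I)) := by
      have h1 : Tendsto r atTop (nhds 1) := by
        have := tendsto_one_div_add_atTop_nhds_zero_nat (𝕜 := ℝ)
        simpa [hr] using (tendsto_const_nhds.add this)
      have h2 : Tendsto (fun k : ℕ => ((r k : ℝ) : ℂ)) atTop (nhds 1) := by
        have := (Complex.continuous_ofReal.tendsto (1 : ℝ)).comp h1
        exact this
      simpa [hu] using (tendsto_const_nhds.add (h2.mul_const Complex.I))
    have htend' : Tendsto u atTop (nhdsWithin ((x : ℂ) + Complex.I) {((x : ℂ) + Complex.I)}ᶜ) := by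
      refine tendsto_nhdsWithin_iff.mpr ⟨htend, Eventually.of_forall fun k => hune k⟩
    refine htend'.frequently (Frequently.of_forall fun k => ?_)
    exact hline (u k) (hure k) (by rw [huim k]; exact hr0 k)
  have := (hgd.analyticOnNhd hUopen).eqOn_zero_of_preconnected_of_frequently_eq_zero
    hUconn hz₀ hfreq
  intro τ hτ
  exact this hτ

open Complex Filter Finset Polynomial in
/-- Kaneko–Zagier uniqueness. If `f₀, …, f_n` are holomorphic on the
upper half-plane and `Σ_{i=0}^{n} f_i(τ)/(τ−τ̄)^i = 0` for all `τ ∈ ℍ`, then each `f_i`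
vanishes identically on `ℍ`. -/
theorem stmt13 (n : ℕ) (f : ℕ → ℂ → ℂ)
    (hf : ∀ i ≤ n, DifferentiableOn ℂ (f i) {τ : ℂ | 0 < τ.im})
    (hsum : ∀ τ : ℂ, 0 < τ.im →
      ∑ i ∈ Finset.range (n + 1), f i τ / (τ - conj τ) ^ i = 0) :
    ∀ i ≤ n, ∀ τ : ℂ, 0 < τ.im → f i τ = 0 := by
  intro i hi τ hτ
  have key := stmt13_key n f hf hsum
  set p : ℂ[X] := ∑ j ∈ Finset.range (n + 1), Polynomial.C (f j τ) * Polynomial.X ^ j with hp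
  have hden : ∀ x : ℝ, (2 * (τ - (x : ℂ))) ≠ 0 := by
    intro x h
    have h2 : (2 * (τ - (x : ℂ))).im = 0 := by rw [h]; simp
    simp [Complex.mul_im, Complex.sub_im] at h2
    exact absurd h2 (ne_of_gt hτ)
  have hroot : ∀ x : ℝ, p.IsRoot ((2 * (τ - (x : ℂ)))⁻¹) := by
    intro x
    have hk := key x τ hτ
    simp only [Polynomial.IsRoot, hp, Polynomial.eval_finset_sum, Polynomial.eval_mul,
      Polynomial.eval_C, Polynomial.eval_pow, Polynomial.eval_X, inv_pow, ← div_eq_mul_inv]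
    exact hk
  have hinj : Function.Injective (fun x : ℝ => (2 * (τ - (x : ℂ)))⁻¹) := by
    intro a b hab
    have h1 : (2 * (τ - (a : ℂ))) = (2 * (τ - (b : ℂ))) :=
      inv_injective hab
    have h2 : (τ - (a : ℂ)) = (τ - (b : ℂ)) := mul_left_cancel₀ two_ne_zero h1
    have : (a : ℂ) = (b : ℂ) := by linear_combination -h2
    exact_mod_cast this
  have hinf : {r : ℂ | p.IsRoot r}.Infinite :=
    Set.infinite_of_injective_forall_mem hinj (fun x => hroot x)
  have hp0 : p = 0 := Polynomial.eq_zero_of_infinite_isRoot p hinf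
  have hcoeff : p.coeff i = f i τ := by
    simp [hp, Polynomial.finset_sum_coeff, Polynomial.coeff_C_mul, Polynomial.coeff_X_pow,
      Finset.sum_ite_eq, Nat.lt_succ_iff.mpr hi]
  rw [hp0] at hcoeff
  simpa using hcoeff.symm
end
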